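/- For every real λ > 0 and all integers r, m with 0 ≤ r < m, one has φ(m, λ)/(m+1) < φ(r, λ)/(r+1), i.e. s_m(λ)/((m+1)·s_{m+1}(λ)) < s_r(λ)/((r+1)·s_{r+1}(λ)), where φ(k, λ) = s_k(λ)/s_{k+1}(λ). -/

import Mathlib

/-- The `n`-th partial sum of the Taylor series of the exponential function. -/
noncomputable def s (n : ℕ) (a : ℝ) : ℝ :=
  ∑ j ∈ Finset.range (n + 1), a ^ j / (Nat.factorial j : ℝ)

/-- The ratio of consecutive partial sums of the exponential series. -/
noncomputable def phi (n : ℕ) (a : ℝ) : ℝ := s n a / s (n + 1) a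

/-!
Write `M n = n! · s_n(a)`. Since `phi n a / (n + 1) = M n / M (n + 1)`, the claim is that the ratios
`M (n + 1) / M n` increase strictly; this is the log-convexity of `M`, which for `a > 0` is the
sequence of moments `∫₀^∞ (a + t)^n e^{-t} dt`. Elementarily, `M (n + 1) = (n + 1) M n + a^(n+1)`,
so `M (n + 1) / M n = n + 1 + q n` with `q n = a^(n+1) / M n`, and `q` obeys the recurrence
`q (n + 1) (n + 1 + q n) = a q n` starting from `q 0 = a`. The ratios increase iff
`q n - 1 < q (n + 1)`, and this inequality is propagated along the recurrence by induction.
-/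

open Nat

noncomputable def sFact (n : ℕ) (a : ℝ) : ℝ := n ! * s n a

noncomputable def sFactExcess (n : ℕ) (a : ℝ) : ℝ := a ^ (n + 1) / sFact n a

lemma s_pos {a : ℝ} (ha : 0 ≤ a) (n : ℕ) : 0 < s n a :=
  Finset.sum_pos' (fun _ _ => by positivity) ⟨0, by simp, by simp⟩

lemma sFact_zero (a : ℝ) : sFact 0 a = 1 := by
  simp [sFact, s]

lemma sFact_succ (n : ℕ) (a : ℝ) : sFact (n + 1) a = (n + 1) * sFact n a + a ^ (n + 1) := by
  simp only [sFact, s, Finset.sum_range_succ _ (n + 1), mul_add, Nat.factorial_succ]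
  field_simp
  push_cast
  ring

lemma sFact_pos {a : ℝ} (ha : 0 ≤ a) (n : ℕ) : 0 < sFact n a :=
  mul_pos (by positivity) (s_pos ha n)

lemma phi_div_succ_eq (n : ℕ) (a : ℝ) : phi n a / (n + 1) = sFact n a / sFact (n + 1) a := by
  simp only [phi, sFact, Nat.factorial_succ]
  push_cast
  field_simp

lemma sFact_succ_div {a : ℝ} (ha : 0 ≤ a) (n : ℕ) :
    sFact (n + 1) a / sFact n a = n + 1 + sFactExcess n a := by
  have := (sFact_pos ha n).ne'
  rw [sFact_succ, sFactExcess]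
  field_simp

lemma sFactExcess_succ_mul {a : ℝ} (ha : 0 ≤ a) (n : ℕ) :
    sFactExcess (n + 1) a * (n + 1 + sFactExcess n a) = a * sFactExcess n a := by
  have := (sFact_pos ha n).ne'
  have := (sFact_pos ha (n + 1)).ne'
  rw [← sFact_succ_div ha, sFactExcess, sFactExcess]
  field_simp
  ring

lemma sub_one_lt_next_of_sub_one_lt {N a q p p' : ℝ} (hN : 0 < N) (ha : 0 ≤ a) (hq : 0 < q)
    (hp : p * (N + q) = a * q) (hp' : p' * (N + 1 + p) = a * p) (h : q - 1 < p) :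
    p - 1 < p' := by
  have hp0 : 0 ≤ p := nonneg_of_mul_nonneg_left (hp ▸ mul_nonneg ha hq.le) (by positivity)
  have key : N * p * (q - p) < (N + 1) * q := by
    rcases le_or_gt q p with hqp | hqp
    · nlinarith [mul_nonneg hN.le hp0]
    · nlinarith [mul_nonneg hN.le hp0]
  -- multiply the goal by `q (N + 1 + p)` and eliminate `a q` and `a p` with the recurrence
  have : q * ((p - 1) * (N + 1 + p)) < q * (p' * (N + 1 + p)) := by
    linear_combination key + p * hp - q * hp'
  exact lt_of_mul_lt_mul_right (lt_of_mul_lt_mul_left this hq.le) (by positivity)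

lemma sFactExcess_sub_one_lt_succ {a : ℝ} (ha : 0 < a) (n : ℕ) :
    sFactExcess n a - 1 < sFactExcess (n + 1) a := by
  induction n with
  | zero =>
    have h1 : sFact 1 a = 1 + a := by simp [sFact_succ 0, sFact_zero]
    rw [sFactExcess, sFactExcess, h1, sFact_zero, lt_div_iff₀ (by positivity)]
    nlinarith
  | succ n ih =>
    refine sub_one_lt_next_of_sub_one_lt (N := n + 1) (by positivity) ha.le ?_
      (sFactExcess_succ_mul ha.le n) ?_ ih
    · exact div_pos (by positivity) (sFact_pos ha.le n)
    · simpa [add_assoc] using sFactExcess_succ_mul ha.le (n + 1)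

lemma strictMono_sFact_succ_div {a : ℝ} (ha : 0 < a) :
    StrictMono fun n => sFact (n + 1) a / sFact n a := by
  refine strictMono_nat_of_lt_succ fun n => ?_
  simp only [sFact_succ_div ha.le]
  push_cast
  linarith [sFactExcess_sub_one_lt_succ ha n]

theorem stmt_8 (a : ℝ) (ha : 0 < a) (r m : ℕ) (hrm : r < m) :
    phi m a / (m + 1 : ℝ) < phi r a / (r + 1 : ℝ) := by
  have hratio (n : ℕ) : 0 < sFact (n + 1) a / sFact n a :=
    div_pos (sFact_pos ha.le _) (sFact_pos ha.le _)
  rw [phi_div_succ_eq, phi_div_succ_eq, ← inv_div (sFact (m + 1) a), ← inv_div (sFact (r + 1) a)]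
  exact (inv_lt_inv₀ (hratio m) (hratio r)).2 (strictMono_sFact_succ_div ha hrm)
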